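/- arXiv:1702.04007 — 6 statements merged into one kernel-verified Lean document; each statement's English description precedes it below -/
import Mathlib

section
/- Let m be a positive integer and x a real number. Then in the ring of formal power series ℝ[[z]], the exponential generating function of the Dowling polynomials satisfies ∑_{n≥0} D_m(n,x) z^n/n! = e^z · exp(x(e^{mz} − 1)/m). -/
/-- Whitney numbers of the second kind:
`W_m(n,k) = (1/(m^k k!)) ∑_{i=0}^k (−1)^{k−i} C(k,i) (mi+1)^n`. -/
noncomputable def whitney2 (m n k : ℕ) : ℝ :=
  (1 / ((m : ℝ) ^ k * k.factorial)) *
    ∑ i ∈ Finset.range (k + 1), (-1 : ℝ) ^ (k - i) * (k.choose i) * ((m : ℝ) * i + 1) ^ n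

/-- Dowling polynomials `D_m(n,x) = ∑_{k=0}^n W_m(n,k) x^k`. -/
noncomputable def dowling (m n : ℕ) (x : ℝ) : ℝ :=
  ∑ k ∈ Finset.range (n + 1), whitney2 m n k * x ^ k

/-- Formal exponential `exp(f) = ∑_k f^k/k!` of a power series, given coefficientwise;
for `f` with zero constant term, `coeff n (f^k) = 0` whenever `k > n`, so this is the
usual formal exponential. -/
noncomputable def expPS (f : PowerSeries ℝ) : PowerSeries ℝ :=
  PowerSeries.mk fun n =>
    ∑ k ∈ Finset.range (n + 1), (PowerSeries.coeff n (f ^ k)) / k.factorial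

/-!
By the binomial theorem, `eᶻ (e^{mz} − 1)^k = ∑ᵢ (−1)^{k−i} C(k,i) e^{(mi+1)z}`, whose `n`-th
coefficient is `∑ᵢ (−1)^{k−i} C(k,i) (mi+1)^n / n! = m^k k! W_m(n,k) / n!`. As `e^{mz} − 1` has no
constant term, only the powers `k ≤ n` of it reach the `n`-th coefficient of the formal exponential;
summing `(x/m)^k / k!` times these coefficients over `k ≤ n` gives `D_m(n,x) / n!`.
-/
open PowerSeries Finset

namespace PowerSeries

theorem coeff_pow_eq_zero_of_lt {R : Type*} [CommSemiring R] {g : R⟦X⟧} (hg : constantCoeff g = 0)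
    {n k : ℕ} (h : n < k) : coeff n (g ^ k) = 0 :=
  X_pow_dvd_iff.mp (pow_dvd_pow_of_dvd (X_dvd_iff.mpr hg) k) n h

section Exp

variable {A : Type*} [CommRing A] [Algebra ℚ A]

theorem constantCoeff_rescale_exp (c : A) : constantCoeff (rescale c (exp A)) = 1 := by
  rw [← coeff_zero_eq_constantCoeff_apply, coeff_rescale, pow_zero, one_mul,
    coeff_zero_eq_constantCoeff_apply, constantCoeff_exp]

theorem exp_mul_rescale_exp_pow (c : A) (i : ℕ) :
    exp A * rescale c (exp A) ^ i = rescale (c * i + 1) (exp A) := by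
  rw [← map_pow, exp_pow_eq_rescale_exp, rescale_rescale, mul_comm c, add_comm]
  calc exp A * rescale (i * c) (exp A) = rescale 1 (exp A) * rescale (i * c) (exp A) := by
        rw [rescale_one, RingHom.id_apply]
    _ = rescale (1 + i * c) (exp A) := exp_mul_exp_eq_exp_add 1 _

end Exp

section Field

variable {K : Type*} [Field K] [CharZero K]

theorem coeff_rescale_exp (c : K) (n : ℕ) : coeff n (rescale c (exp K)) = c ^ n / n.factorial := by
  rw [coeff_rescale, coeff_exp]
  simp [div_eq_mul_inv]

theorem coeff_exp_mul_pow_C_mul_rescale_exp_sub_one (a c : K) (n k : ℕ) :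
    coeff n (exp K * (C a * (rescale c (exp K) - 1)) ^ k) =
      a ^ k / n.factorial *
        ∑ i ∈ range (k + 1), (-1) ^ (k - i) * (k.choose i : K) * (c * i + 1) ^ n := by
  rw [mul_pow, ← map_pow, sub_eq_add_neg, add_pow, mul_sum, mul_sum, map_sum, mul_sum]
  refine sum_congr rfl fun i _ => ?_
  have hterm :
      exp K * (C (a ^ k) * (rescale c (exp K) ^ i * (-1) ^ (k - i) * (k.choose i : K⟦X⟧))) =
      C (a ^ k * (-1) ^ (k - i) * k.choose i) * (exp K * rescale c (exp K) ^ i) := by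
    simp only [map_mul, map_pow, map_neg, map_one, map_natCast]
    ring
  rw [hterm, exp_mul_rescale_exp_pow, coeff_C_mul, coeff_rescale_exp]
  ring

end Field

end PowerSeries

theorem coeff_expPS_of_le {g : ℝ⟦X⟧} (hg : constantCoeff g = 0) {n N : ℕ} (hn : n ≤ N) :
    coeff n (expPS g) = ∑ k ∈ range (N + 1), coeff n (g ^ k) / k.factorial := by
  rw [expPS, coeff_mk]
  refine sum_subset (range_subset_range.mpr (by omega)) fun k _ hk => ?_
  rw [coeff_pow_eq_zero_of_lt hg (by simpa using hk), zero_div]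

theorem coeff_mul_expPS {g : ℝ⟦X⟧} (hg : constantCoeff g = 0) (h : ℝ⟦X⟧) (n : ℕ) :
    coeff n (h * expPS g) = ∑ k ∈ range (n + 1), coeff n (h * g ^ k) / k.factorial :=
  calc coeff n (h * expPS g)
      = ∑ p ∈ antidiagonal n, ∑ k ∈ range (n + 1),
          coeff p.1 h * coeff p.2 (g ^ k) / k.factorial := by
        rw [coeff_mul]
        refine sum_congr rfl fun p hp => ?_
        rw [coeff_expPS_of_le hg (HasAntidiagonal.antidiagonal.snd_le hp), mul_sum]
        simp only [mul_div_assoc]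
    _ = ∑ k ∈ range (n + 1), coeff n (h * g ^ k) / k.factorial := by
        rw [sum_comm]
        simp only [coeff_mul, sum_div]

theorem dowling_egf_general (m : ℕ) (x : ℝ) :
    PowerSeries.mk (fun n => dowling m n x / n.factorial) =
      PowerSeries.exp ℝ *
        expPS (PowerSeries.C (x / m) *
          (PowerSeries.rescale (m : ℝ) (PowerSeries.exp ℝ) - 1)) := by
  have hg : constantCoeff (C (x / m) * (rescale (m : ℝ) (exp ℝ) - 1)) = 0 := by
    simp [constantCoeff_rescale_exp]
  ext n
  rw [coeff_mk, coeff_mul_expPS hg, dowling, sum_div]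
  refine sum_congr rfl fun k _ => ?_
  rw [coeff_exp_mul_pow_C_mul_rescale_exp_sub_one, whitney2]
  ring

/-- The EGF of the Dowling polynomials is `e^z · exp(x(e^{mz} − 1)/m)` in `ℝ[[z]]`. -/
theorem dowling_egf (m : ℕ) (hm : 0 < m) (x : ℝ) :
    PowerSeries.mk (fun n => dowling m n x / n.factorial) =
      PowerSeries.exp ℝ *
        expPS (PowerSeries.C (x / m) *
          (PowerSeries.rescale (m : ℝ) (PowerSeries.exp ℝ) - 1)) :=
  dowling_egf_general m x
end

section
/- Let m be a positive integer and x a real number. Define polynomials P_n ∈ ℝ[z] by P_0 = 1, P_1 = z − (1+x), and P_n = (z − (1 + x + (n−1)m))·P_{n−1} − (n−1)·m·x·P_{n−2} for n ≥ 2. Let L : ℝ[z] → ℝ be the unique linear functional with L(z^n) = D_m(n,x) for all n ≥ 0. Then L(P_i · P_j) = 0 whenever i ≠ j; that is, the Dowling polynomials D_m(n,x) are the moments of the orthogonal polynomial family (P_n). -/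
/-- `P_0 = 1`, `P_1 = z − (1+x)`,
`P_n = (z − (1 + x + (n−1)m))·P_{n−1} − (n−1)·m·x·P_{n−2}` for `n ≥ 2`. -/
noncomputable def dowlingOP (m : ℕ) (x : ℝ) : ℕ → Polynomial ℝ
  | 0 => 1
  | 1 => Polynomial.X - Polynomial.C (1 + x)
  | (n + 2) =>
      (Polynomial.X - Polynomial.C (1 + x + ((n : ℝ) + 1) * m)) * dowlingOP m x (n + 1) -
        Polynomial.C (((n : ℝ) + 1) * m * x) * dowlingOP m x n

/-!
Put `a = x / m`. Newton's forward-difference expansion of `t ↦ (m t + 1)^n` turns the Whitney sum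
into the Dobinski-type formula `∑ᵢ aⁱ/i! (m i + 1)^n = eᵃ D_m(n,x)`, so `eᵃ L` is summation against
the weights `aⁱ/i!` at the nodes `m i + 1`. Shifting the summation index gives
`L((z - 1) p(z)) = x L(p(z + m))`. On the other side, the recurrence together with
`P_n(z + m) = P_n(z) + n m P_{n-1}(z)` yields `P_{n+1}(z) = (z - 1) P_n(z - m) - x P_n(z)`, hence
`L(P_{n+1} q) = x L(P_n (q(z + m) - q(z)))`. As the difference lowers the degree of `q`, induction
gives `L(P_n q) = 0` whenever `deg q < n`.
-/

open Polynomial fwdDiff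
open scoped Nat

theorem hasSum_pow_div_factorial_mul_choose (a : ℝ) (k : ℕ) :
    HasSum (fun i : ℕ => a ^ i / i ! * i.choose k) (a ^ k / k ! * Real.exp a) := by
  rw [← hasSum_nat_add_iff' k]
  have hvanish : ∑ i ∈ Finset.range k, a ^ i / i ! * (i.choose k : ℝ) = 0 :=
    Finset.sum_eq_zero fun i hi => by simp [Nat.choose_eq_zero_of_lt (Finset.mem_range.mp hi)]
  have hshift : (fun i => a ^ (i + k) / (i + k)! * ((i + k).choose k : ℝ)) =
      fun i => a ^ k / k ! * (a ^ i / i !) := by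
    funext i
    have hchoose : ((i + k).choose k : ℝ) * i ! * k ! = (i + k)! := by
      exact_mod_cast Nat.add_choose_mul_factorial_mul_factorial i k
    field_simp
    linear_combination a ^ (i + k) * hchoose
  rw [hvanish, sub_zero, hshift, Real.exp_eq_exp_ℝ]
  exact (NormedSpace.expSeries_div_hasSum_exp a).mul_left _

theorem Polynomial.eval_natCast_eq_sum_choose_mul_fwdDiff_iter {R : Type*} [CommRing R]
    (P : R[X]) {N : ℕ} (hN : P.natDegree ≤ N) (i : ℕ) :
    P.eval (i : R) = ∑ k ∈ Finset.range (N + 1), (i.choose k : R) * Δ_[1] ^[k] P.eval 0 := by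
  have newton := shift_eq_sum_fwdDiff_iter (1 : R) P.eval i 0
  simp only [zero_add, nsmul_eq_mul, mul_one] at newton
  rw [newton, Finset.sum_subset (Finset.range_subset_range.mpr (by omega : i + 1 ≤ i + N + 1)),
    ← Finset.sum_subset (Finset.range_subset_range.mpr (by omega : N + 1 ≤ i + N + 1))]
  · intro k _ hk
    rw [P.fwdDiff_iter_eq_zero_of_degree_lt (by rw [Finset.mem_range] at hk; omega), Pi.zero_apply, mul_zero]
  · intro k _ hk
    rw [Nat.choose_eq_zero_of_lt (by rw [Finset.mem_range] at hk; omega), Nat.cast_zero, zero_mul]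

theorem hasSum_pow_div_factorial_mul_eval (a : ℝ) (P : ℝ[X]) {N : ℕ} (hN : P.natDegree ≤ N) :
    HasSum (fun i : ℕ => a ^ i / i ! * P.eval (i : ℝ))
      (Real.exp a * ∑ k ∈ Finset.range (N + 1), a ^ k / k ! * Δ_[1] ^[k] P.eval 0) := by
  have hvalue : Real.exp a * ∑ k ∈ Finset.range (N + 1), a ^ k / k ! * Δ_[1] ^[k] P.eval 0 =
      ∑ k ∈ Finset.range (N + 1), Δ_[1] ^[k] P.eval 0 * (a ^ k / k ! * Real.exp a) := by
    rw [Finset.mul_sum]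
    exact Finset.sum_congr rfl fun k _ => by ring
  rw [hvalue]
  refine (hasSum_sum fun k _ => (hasSum_pow_div_factorial_mul_choose a k).mul_left
    (Δ_[1] ^[k] P.eval 0)).congr_fun fun i => ?_
  rw [P.eval_natCast_eq_sum_choose_mul_fwdDiff_iter hN, Finset.mul_sum]
  exact Finset.sum_congr rfl fun k _ => by ring

theorem whitney2_eq_fwdDiff_iter (m n k : ℕ) :
    whitney2 m n k = Δ_[1] ^[k] (fun t : ℝ => ((m : ℝ) * t + 1) ^ n) 0 / ((m : ℝ) ^ k * k !) := by
  rw [whitney2, fwdDiff_iter_eq_sum_shift, one_div_mul_eq_div]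
  congr 1
  refine Finset.sum_congr rfl fun i _ => ?_
  simp [zsmul_eq_mul]

theorem hasSum_dobinski_dowling {m : ℕ} (hm : m ≠ 0) (n : ℕ) (x : ℝ) :
    HasSum (fun i : ℕ => (x / m) ^ i / i ! * ((m : ℝ) * i + 1) ^ n)
      (Real.exp (x / m) * dowling m n x) := by
  have hdeg : ((C (m : ℝ) * X + C 1) ^ n).natDegree ≤ n :=
    natDegree_pow_le_of_le n natDegree_linear_le |>.trans_eq (mul_one n)
  have hseries := hasSum_pow_div_factorial_mul_eval (x / m) _ hdeg
  simp only [eval_pow, eval_add, eval_mul, eval_C, eval_X] at hseries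
  convert hseries using 2
  refine Finset.sum_congr rfl fun k _ => ?_
  have hmk : (m : ℝ) ^ k ≠ 0 := pow_ne_zero k (Nat.cast_ne_zero.mpr hm)
  rw [whitney2_eq_fwdDiff_iter, div_pow]
  field_simp

section MomentFunctional

variable {m : ℕ} {x : ℝ} {L : ℝ[X] →ₗ[ℝ] ℝ}

theorem hasSum_eval_of_map_X_pow_eq_dowling (hm : m ≠ 0)
    (hL : ∀ n : ℕ, L (X ^ n) = dowling m n x) (p : ℝ[X]) :
    HasSum (fun i : ℕ => (x / m) ^ i / i ! * p.eval ((m : ℝ) * i + 1))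
      (Real.exp (x / m) * L p) := by
  induction p using Polynomial.induction_on' with
  | add p q hp hq => simpa only [eval_add, mul_add, map_add] using hp.add hq
  | monomial n c =>
    rw [← smul_X_eq_monomial, map_smul, hL, smul_eq_mul, mul_left_comm]
    refine ((hasSum_dobinski_dowling hm n x).mul_left c).congr_fun fun i => ?_
    simp only [eval_smul, eval_pow, eval_X, smul_eq_mul]
    ring

theorem map_X_sub_one_mul_of_map_X_pow_eq_dowling (hm : m ≠ 0)
    (hL : ∀ n : ℕ, L (X ^ n) = dowling m n x) (p : ℝ[X]) :
    L ((X - C 1) * p) = x * L (p.comp (X + C (m : ℝ))) := by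
  have hlhs := hasSum_eval_of_map_X_pow_eq_dowling hm hL ((X - C 1) * p)
  have hshift : HasSum (fun i : ℕ => (x / m) ^ i / i ! * ((X - C 1) * p).eval ((m : ℝ) * i + 1))
      (x * (Real.exp (x / m) * L (p.comp (X + C (m : ℝ))))) := by
    rw [← hasSum_nat_add_iff' 1]
    simp only [Finset.sum_range_one, Nat.cast_zero, mul_zero, zero_add, eval_mul, eval_sub,
      eval_X, eval_C, sub_self, zero_mul, sub_zero]
    refine ((hasSum_eval_of_map_X_pow_eq_dowling hm hL _).mul_left x).congr_fun fun i => ?_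
    have hm' : (m : ℝ) ≠ 0 := Nat.cast_ne_zero.mpr hm
    simp only [eval_comp, eval_add, eval_X, eval_C, Nat.factorial_succ, div_pow]
    push_cast
    field_simp
    ring_nf
  exact mul_left_cancel₀ (Real.exp_ne_zero (x / m)) ((hlhs.unique hshift).trans (mul_left_comm _ _ _))

end MomentFunctional

section Orthogonality

variable {m : ℕ} {x : ℝ}

theorem eval_dowlingOP_add_two (n : ℕ) (t : ℝ) :
    (dowlingOP m x (n + 2)).eval t = (t - (1 + x + (n + 1) * m)) * (dowlingOP m x (n + 1)).eval t
      - (n + 1) * m * x * (dowlingOP m x n).eval t := by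
  simp [dowlingOP]

theorem eval_add_dowlingOP_succ : ∀ (n : ℕ) (t : ℝ),
    (dowlingOP m x (n + 1)).eval (t + m) =
      (dowlingOP m x (n + 1)).eval t + (n + 1) * m * (dowlingOP m x n).eval t
  | 0, t => by simp [dowlingOP]; ring
  | 1, t => by simp [dowlingOP]; ring
  | n + 2, t => by
    have h₁ := eval_add_dowlingOP_succ (n + 1) t
    have h₀ := eval_add_dowlingOP_succ n t
    have hrec := eval_dowlingOP_add_two (m := m) (x := x) n t
    rw [eval_dowlingOP_add_two (n + 1), eval_dowlingOP_add_two (n + 1)]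
    -- turn `n + 1 + 1` into `n + 2`, so that `linear_combination` sees the same atoms
    simp only [add_assoc, Nat.reduceAdd] at h₁
    push_cast at h₁ h₀ ⊢
    linear_combination (t + m - (1 + x + (n + 2) * m)) * h₁ - (n + 2) * m * x * h₀
      - (n + 2) * m * hrec

theorem eval_dowlingOP_succ : ∀ (n : ℕ) (t : ℝ),
    (dowlingOP m x (n + 1)).eval t = (t - 1) * (dowlingOP m x n).eval (t - m)
      - x * (dowlingOP m x n).eval t
  | 0, t => by simp [dowlingOP]; ring
  | n + 1, t => by
    have ih := eval_dowlingOP_succ n t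
    have hlower := eval_add_dowlingOP_succ (m := m) (x := x) n (t - m)
    rw [sub_add_cancel] at hlower
    rw [eval_dowlingOP_add_two]
    linear_combination (t - 1) * hlower - (n + 1) * m * ih

theorem dowlingOP_succ_eq (n : ℕ) :
    dowlingOP m x (n + 1) =
      (X - C 1) * (dowlingOP m x n).comp (X - C (m : ℝ)) - C x * dowlingOP m x n :=
  Polynomial.funext fun t => by simp [eval_dowlingOP_succ n t]

theorem natDegree_dowlingOP_le : ∀ n : ℕ, (dowlingOP m x n).natDegree ≤ n
  | 0 => by simp [dowlingOP]
  | n + 1 => by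
    have ih := natDegree_dowlingOP_le n
    have hcomp : ((dowlingOP m x n).comp (X - C (m : ℝ))).natDegree ≤ n := by
      rwa [natDegree_comp, natDegree_X_sub_C, mul_one]
    rw [dowlingOP_succ_eq]
    exact (natDegree_sub_le_of_le (natDegree_mul_le_of_le (natDegree_X_sub_C_le 1) hcomp)
      ((natDegree_C_mul_le _ _).trans ih)).trans (by omega)

theorem Polynomial.degree_comp_X_add_C_sub_lt {R : Type*} [Ring R] {q : R[X]} {n : ℕ}
    (hq : q.degree ≤ n) (c : R) : (q.comp (X + C c) - q).degree < n := by
  rcases eq_or_ne q 0 with rfl | hq₀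
  · simp
  rw [← taylor_apply]
  exact (degree_sub_lt_right (degree_taylor q c) hq₀ (leadingCoeff_taylor c q)).trans_le hq

theorem map_dowlingOP_mul_eq_zero_of_degree_lt (L : ℝ[X] →ₗ[ℝ] ℝ)
    (hL : ∀ p, L ((X - C 1) * p) = x * L (p.comp (X + C (m : ℝ)))) :
    ∀ (n : ℕ) (q : ℝ[X]), q.degree < n → L (dowlingOP m x n * q) = 0
  | 0, q, hq => by simp_all
  | n + 1, q, hq => by
    have hshift : ((dowlingOP m x n).comp (X - C (m : ℝ)) * q).comp (X + C (m : ℝ)) =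
        dowlingOP m x n * q.comp (X + C (m : ℝ)) := by
      rw [mul_comp, comp_assoc]
      simp
    calc L (dowlingOP m x (n + 1) * q)
        = L ((X - C 1) * ((dowlingOP m x n).comp (X - C (m : ℝ)) * q))
          - x * L (dowlingOP m x n * q) := by
          rw [dowlingOP_succ_eq, sub_mul, map_sub, mul_assoc, mul_assoc, ← smul_eq_C_mul,
            map_smul, smul_eq_mul]
      _ = x * L (dowlingOP m x n * (q.comp (X + C (m : ℝ)) - q)) := by
          rw [hL, hshift, mul_sub, map_sub, mul_sub]
      _ = 0 := by
          rw [map_dowlingOP_mul_eq_zero_of_degree_lt L hL n _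
            (degree_comp_X_add_C_sub_lt (Order.le_of_lt_succ hq) _), mul_zero]

end Orthogonality

/-- The Dowling polynomials `D_m(n,x)` are the moments of the orthogonal family `P_n`. -/
theorem dowling_moments (m : ℕ) (hm : 0 < m) (x : ℝ)
    (L : Polynomial ℝ →ₗ[ℝ] ℝ)
    (hL : ∀ n : ℕ, L (Polynomial.X ^ n) = dowling m n x) :
    ∀ i j : ℕ, i ≠ j → L (dowlingOP m x i * dowlingOP m x j) = 0 := by
  have horth := map_dowlingOP_mul_eq_zero_of_degree_lt L
    (map_X_sub_one_mul_of_map_X_pow_eq_dowling hm.ne' hL)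
  have hdeg {i j : ℕ} (h : i < j) : (dowlingOP m x i).degree < j :=
    (degree_le_of_natDegree_le (natDegree_dowlingOP_le i)).trans_lt (by exact_mod_cast h)
  intro i j hij
  rcases hij.lt_or_gt with h | h
  · rw [mul_comm]
    exact horth j _ (hdeg h)
  · exact horth i _ (hdeg h)
end

section
/- Let m be a positive integer and x a real number. Then in ℝ[[z]] the exponential generating function of the Tanny-Dowling polynomials satisfies (m + x − x·e^{mz}) · ∑_{n≥0} 𝓕_m(n,x) z^n/n! = m·e^z; equivalently ∑_{n≥0} 𝓕_m(n,x) z^n/n! = m e^z/(m + x − x e^{mz}). -/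
/-- Tanny–Dowling polynomials `𝓕_m(n,x) = ∑_{k=0}^n k!·W_m(n,k)·x^k`. -/
noncomputable def tannyDowling (m n : ℕ) (x : ℝ) : ℝ :=
  ∑ k ∈ Finset.range (n + 1), (k.factorial : ℝ) * whitney2 m n k * x ^ k

/-
Since `e^z (e^{mz} - 1)^k = ∑_i (-1)^{k-i} C(k,i) e^{(mi+1)z}` by the binomial theorem, the
exponential generating function of `n ↦ k! W_m(n,k)` is `e^z (e^{mz} - 1)^k / m^k`; in particular
`W_m(n,k) = 0` for `n < k`. Hence the EGF of `𝓕_m(·,x)` is `e^z ∑_k q^k` with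
`q = (x/m)(e^{mz} - 1)`, while `m + x - x e^{mz} = m (1 - q)`. As `q` has no constant term,
cutting the geometric series at `N` only changes coefficients beyond `N`, and
`(1 - q) ∑_{k ≤ N} q^k = 1 - q^{N+1}` gives the identity modulo `z^{N+1}` for every `N`.
-/

open PowerSeries Nat
open Finset hiding mk

theorem PowerSeries.eq_of_forall_X_pow_dvd_sub {R : Type*} [CommRing R] {f g : R⟦X⟧}
    (h : ∀ N, X ^ (N + 1) ∣ f - g) : f = g := by
  ext N
  simpa [sub_eq_zero] using X_pow_dvd_iff.mp (h N) N N.lt_succ_self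

theorem PowerSeries.rescale_exp_pow {A : Type*} [CommRing A] [Algebra ℚ A] (a : A) (k : ℕ) :
    rescale a (exp A) ^ k = rescale (k * a) (exp A) := by
  rw [← map_pow, exp_pow_eq_rescale_exp, rescale_rescale]

theorem PowerSeries.X_dvd_rescale_exp_sub_one {A : Type*} [CommRing A] [Algebra ℚ A] (a : A) :
    X ∣ rescale a (exp A) - 1 := by
  rw [X_dvd_iff, map_sub, ← coeff_zero_eq_constantCoeff_apply, coeff_rescale]
  simp

theorem whitney2_egf (m k : ℕ) :
    mk (fun n => (k ! : ℝ) * whitney2 m n k / n !) =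
      C ((m : ℝ) ^ k)⁻¹ * (exp ℝ * (rescale (m : ℝ) (exp ℝ) - 1) ^ k) := by
  have hbinom : exp ℝ * (rescale (m : ℝ) (exp ℝ) - 1) ^ k =
      ∑ i ∈ range (k + 1),
        C ((-1 : ℝ) ^ (k - i) * k.choose i) * rescale ((m : ℝ) * i + 1) (exp ℝ) := by
    rw [sub_eq_add_neg, add_pow, mul_sum]
    refine sum_congr rfl fun i _ => ?_
    rw [rescale_exp_pow, mul_comm (i : ℝ), add_comm, ← exp_mul_exp_eq_exp_add, rescale_one]
    simp only [map_mul, map_pow, map_neg, map_one, map_natCast, RingHom.id_apply]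
    ring
  ext n
  rw [hbinom, coeff_mk, coeff_C_mul, map_sum]
  simp only [coeff_C_mul, coeff_rescale, coeff_exp, whitney2, mul_sum, sum_div]
  refine sum_congr rfl fun i _ => ?_
  simp only [map_div₀, map_one, map_natCast]
  have : (k ! : ℝ) ≠ 0 := by positivity
  field_simp

theorem whitney2_eq_zero_of_lt {m n k : ℕ} (h : n < k) : whitney2 m n k = 0 := by
  have hdvd : X ^ k ∣ mk (fun n => (k ! : ℝ) * whitney2 m n k / n !) := by
    rw [whitney2_egf]
    exact ((pow_dvd_pow_of_dvd (X_dvd_rescale_exp_sub_one _) k).mul_left _).mul_left _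
  simpa [factorial_ne_zero] using X_pow_dvd_iff.mp hdvd n h

theorem X_pow_dvd_tannyDowling_egf_sub_geom_sum (m N : ℕ) (x : ℝ) :
    X ^ (N + 1) ∣ mk (fun n => tannyDowling m n x / n !) -
      exp ℝ * ∑ k ∈ range (N + 1), (C (x / m) * (rescale (m : ℝ) (exp ℝ) - 1)) ^ k := by
  have hterm : ∀ k, exp ℝ * (C (x / m) * (rescale (m : ℝ) (exp ℝ) - 1)) ^ k =
      C (x ^ k) * mk (fun n => (k ! : ℝ) * whitney2 m n k / n !) := by
    intro k
    rw [whitney2_egf, mul_pow, ← map_pow, div_pow, div_eq_mul_inv, map_mul]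
    ring
  rw [mul_sum, sum_congr rfl fun k _ => hterm k]
  refine X_pow_dvd_iff.mpr fun n hn => ?_
  rw [map_sub, coeff_mk, map_sum, tannyDowling, sum_div, sub_eq_zero]
  simp only [coeff_C_mul, coeff_mk]
  have hvanish : ∀ k ∈ range (N + 1), k ∉ range (n + 1) →
      x ^ k * ((k ! : ℝ) * whitney2 m n k / n !) = 0 := fun k _ hk => by
    rw [whitney2_eq_zero_of_lt (by simpa using hk), mul_zero, zero_div, mul_zero]
  rw [← sum_subset (range_subset_range.mpr (by omega)) hvanish]
  exact sum_congr rfl fun k _ => by ring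

/-- The EGF of the Tanny–Dowling polynomials satisfies
`(m + x − x·e^{mz}) · ∑_{n≥0} 𝓕_m(n,x) z^n/n! = m·e^z` in `ℝ[[z]]`;
equivalently `∑ 𝓕_m(n,x) z^n/n! = m e^z/(m + x − x e^{mz})`. -/
theorem tannyDowling_egf (m : ℕ) (hm : 0 < m) (x : ℝ) :
    (PowerSeries.C ((m : ℝ) + x) -
        PowerSeries.C x * PowerSeries.rescale (m : ℝ) (PowerSeries.exp ℝ)) *
      PowerSeries.mk (fun n => tannyDowling m n x / n.factorial) =
      PowerSeries.C (m : ℝ) * PowerSeries.exp ℝ := by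
  set q := C (x / m) * (rescale (m : ℝ) (exp ℝ) - 1)
  have hfactor : C ((m : ℝ) + x) - C x * rescale (m : ℝ) (exp ℝ) = C (m : ℝ) * (1 - q) := by
    rw [mul_sub, ← mul_assoc, ← map_mul, mul_div_cancel₀ x (by positivity), map_add]
    ring
  rw [hfactor]
  refine eq_of_forall_X_pow_dvd_sub fun N => ?_
  have htelescope : C (m : ℝ) * (1 - q) * mk (fun n => tannyDowling m n x / n !) -
      C (m : ℝ) * exp ℝ =
      C (m : ℝ) * (1 - q) *
          (mk (fun n => tannyDowling m n x / n !) - exp ℝ * ∑ k ∈ range (N + 1), q ^ k) -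
        C (m : ℝ) * exp ℝ * q ^ (N + 1) := by
    linear_combination C (m : ℝ) * exp ℝ * mul_neg_geom_sum q (N + 1)
  have hq : X ∣ q := (X_dvd_rescale_exp_sub_one _).mul_left _
  rw [htelescope]
  exact dvd_sub ((X_pow_dvd_tannyDowling_egf_sub_geom_sum m N x).mul_left _)
    ((pow_dvd_pow_of_dvd hq (N + 1)).mul_left _)
end

section
/- Let m be a positive integer and x a real number. For every n ≥ 0, the Hankel determinant of the Tanny-Dowling polynomials satisfies det( (𝓕_m(i+j, x))_{0 ≤ i,j ≤ n} ) = (x(x+m))^{C(n+1,2)} · ∏_{k=0}^n (k!)^2, where C(n+1,2) = n(n+1)/2. -/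
open Finset Function fwdDiff Matrix
open scoped Nat

namespace TannyDowling

section Delannoy

variable {R : Type*} [CommRing R]

def weightedDelannoy (z : R) : ℕ → ℕ → R
  | 0, s => z ^ s
  | r + 1, 0 => z ^ (r + 1)
  | r + 1, s + 1 =>
    z * (weightedDelannoy z r (s + 1) + weightedDelannoy z (r + 1) s + weightedDelannoy z r s)

lemma weightedDelannoy_zero_right (z : R) (r : ℕ) : weightedDelannoy z r 0 = z ^ r := by
  cases r <;> simp [weightedDelannoy]

def lowerBidiagonal (z : R) (n : ℕ) : Matrix (Fin n) (Fin n) R :=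
  of fun i j => if i = j then 1 else if (i : ℕ) = j + 1 then -z else 0

lemma det_lowerBidiagonal (z : R) (n : ℕ) : (lowerBidiagonal z n).det = 1 := by
  rw [det_of_isLowerTriangular]
  · simp [lowerBidiagonal]
  · intro i j hij
    have : (i : ℕ) < j := hij
    simp only [lowerBidiagonal, of_apply, Fin.ext_iff]
    rw [if_neg (by omega), if_neg (by omega)]

lemma lowerBidiagonal_mul_apply_zero (z : R) {n : ℕ} (M : Matrix (Fin (n + 1)) (Fin (n + 1)) R)
    (k : Fin (n + 1)) : (lowerBidiagonal z (n + 1) * M) 0 k = M 0 k := by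
  rw [mul_apply, Fintype.sum_eq_single 0]
  · simp [lowerBidiagonal]
  · intro p hp
    simp [lowerBidiagonal, Ne.symm hp]

lemma lowerBidiagonal_mul_apply_succ (z : R) {n : ℕ} (M : Matrix (Fin (n + 1)) (Fin (n + 1)) R)
    (i : Fin n) (k : Fin (n + 1)) :
    (lowerBidiagonal z (n + 1) * M) i.succ k = M i.succ k - z * M i.castSucc k := by
  rw [mul_apply, Fintype.sum_eq_add i.succ i.castSucc (Fin.castSucc_lt_succ).ne']
  · simp [lowerBidiagonal, Fin.ext_iff, sub_eq_add_neg]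
  · rintro p ⟨h1, h2⟩
    simp only [ne_eq, Fin.ext_iff, Fin.val_succ, Fin.val_castSucc] at h1 h2
    simp only [lowerBidiagonal, of_apply, Fin.ext_iff, Fin.val_succ]
    rw [if_neg (by omega), if_neg (by omega), zero_mul]

lemma mul_lowerBidiagonal_transpose_apply_zero (z : R) {n : ℕ}
    (M : Matrix (Fin (n + 1)) (Fin (n + 1)) R) (i : Fin (n + 1)) :
    (M * (lowerBidiagonal z (n + 1))ᵀ) i 0 = M i 0 := by
  rw [← transpose_apply (M * _), transpose_mul, transpose_transpose,
    lowerBidiagonal_mul_apply_zero, transpose_apply]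

lemma mul_lowerBidiagonal_transpose_apply_succ (z : R) {n : ℕ}
    (M : Matrix (Fin (n + 1)) (Fin (n + 1)) R) (i : Fin (n + 1)) (k : Fin n) :
    (M * (lowerBidiagonal z (n + 1))ᵀ) i k.succ = M i k.succ - z * M i k.castSucc := by
  rw [← transpose_apply (M * _), transpose_mul, transpose_transpose,
    lowerBidiagonal_mul_apply_succ, transpose_apply, transpose_apply]

def delannoyMatrix (z : R) (n : ℕ) : Matrix (Fin n) (Fin n) R :=
  of fun r s => weightedDelannoy z r s

theorem det_delannoyMatrix (z : R) (n : ℕ) :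
    (delannoyMatrix z (n + 1)).det = (z * (z + 1)) ^ (n + 1).choose 2 := by
  induction n with
  | zero => simp [delannoyMatrix, weightedDelannoy]
  | succ n ih =>
    let A := lowerBidiagonal z (n + 2) * delannoyMatrix z (n + 2) * (lowerBidiagonal z (n + 2))ᵀ
    have hA_zero_zero : A 0 0 = 1 := by
      simp [A, mul_lowerBidiagonal_transpose_apply_zero, lowerBidiagonal_mul_apply_zero,
        delannoyMatrix, weightedDelannoy]
    have hA_zero_succ (k : Fin (n + 1)) : A 0 k.succ = 0 := by
      simp only [A, delannoyMatrix, mul_lowerBidiagonal_transpose_apply_succ,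
        lowerBidiagonal_mul_apply_zero, of_apply, Fin.val_zero, Fin.val_succ, Fin.val_castSucc,
        weightedDelannoy, pow_succ]
      ring
    have hA_succ_succ :
        A.submatrix Fin.succ Fin.succ = (z * (z + 1)) • delannoyMatrix z (n + 1) := by
      ext i j
      simp only [A, delannoyMatrix, submatrix_apply, mul_lowerBidiagonal_transpose_apply_succ,
        lowerBidiagonal_mul_apply_succ, of_apply, Fin.val_succ, Fin.val_castSucc, weightedDelannoy,
        Matrix.smul_apply, smul_eq_mul]
      ring
    calc (delannoyMatrix z (n + 2)).det = A.det := by simp [A, det_lowerBidiagonal]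
      _ = (A.submatrix Fin.succ Fin.succ).det := by
        rw [det_succ_row_zero, Fin.sum_univ_succ]
        simp [hA_zero_zero, hA_zero_succ]
      _ = (z * (z + 1)) ^ (n + 2).choose 2 := by
        rw [hA_succ_succ, det_smul, Fintype.card_fin, ih, ← pow_add,
          Nat.choose_succ_succ' (n + 1) 1, Nat.choose_one_right]

def newtonFunctional (z : R) (N : ℕ) : (ℕ → R) →ₗ[R] R where
  toFun f := ∑ k ∈ range (N + 1), z ^ k * Δ_[1] ^[k] f 0
  map_add' f g := by simp [mul_add, sum_add_distrib]
  map_smul' c f := by simp [mul_sum, mul_left_comm]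

lemma newtonFunctional_apply (z : R) (N : ℕ) (f : ℕ → R) :
    newtonFunctional z N f = ∑ k ∈ range (N + 1), z ^ k * Δ_[1] ^[k] f 0 := rfl

lemma newtonFunctional_succ (z : R) (N : ℕ) (f : ℕ → R) :
    newtonFunctional z (N + 1) f = f 0 + z * newtonFunctional z N (Δ_[1] f) := by
  rw [newtonFunctional_apply, sum_range_succ', newtonFunctional_apply, mul_sum, add_comm]
  simp [pow_succ', mul_assoc]

lemma fwdDiff_choose_succ (s : ℕ) :
    Δ_[1] (fun a : ℕ => (a.choose (s + 1) : R)) = fun a => (a.choose s : R) := by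
  ext a
  simp [fwdDiff, Nat.choose_succ_succ']

lemma fwdDiff_choose_succ_mul_choose_succ (r s : ℕ) :
    Δ_[1] (fun a : ℕ => (a.choose (r + 1) : R) * a.choose (s + 1)) =
      (fun a => (a.choose r : R) * a.choose (s + 1)) +
        (fun a => (a.choose (r + 1) : R) * a.choose s) +
        fun a => (a.choose r : R) * a.choose s := by
  ext a
  simp only [fwdDiff, Nat.choose_succ_succ', Nat.cast_add, Pi.add_apply]
  ring

lemma newtonFunctional_choose (z : R) {N s : ℕ} (hs : s ≤ N) :
    newtonFunctional z N (fun a => (a.choose s : R)) = z ^ s := by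
  induction N generalizing s with
  | zero => simp [Nat.le_zero.1 hs, newtonFunctional_apply]
  | succ N ih =>
    rw [newtonFunctional_succ]
    rcases s with _ | s
    · simp [show (fun _ : ℕ => (0 : R)) = 0 from rfl]
    · rw [fwdDiff_choose_succ, ih (by omega)]
      simp [pow_succ, mul_comm]

lemma newtonFunctional_choose_mul_choose (z : R) {N r s : ℕ} (h : r + s ≤ N) :
    newtonFunctional z N (fun a => (a.choose r : R) * a.choose s) = weightedDelannoy z r s := by
  induction N generalizing r s with
  | zero =>
    obtain ⟨rfl, rfl⟩ : r = 0 ∧ s = 0 := by omega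
    simp [newtonFunctional_apply, weightedDelannoy]
  | succ N ih =>
    rcases r with _ | r <;> rcases s with _ | s
    · simpa [weightedDelannoy] using newtonFunctional_choose z h
    · simpa [weightedDelannoy] using newtonFunctional_choose z h
    · simpa [weightedDelannoy_zero_right] using newtonFunctional_choose z h
    · rw [newtonFunctional_succ, fwdDiff_choose_succ_mul_choose_succ, map_add, map_add,
        ih (by omega), ih (by omega), ih (by omega)]
      simp [weightedDelannoy]

end Delannoy

lemma fwdDiff_iter_comp_natCast {R G : Type*} [AddCommMonoidWithOne R] [AddCommGroup G]
    (f : R → G) (k : ℕ) : Δ_[1] ^[k] (f ∘ Nat.cast) = (Δ_[1] ^[k] f) ∘ Nat.cast := by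
  induction k generalizing f with
  | zero => rfl
  | succ k ih =>
    have h : Δ_[1] (f ∘ Nat.cast) = (Δ_[1] f) ∘ (Nat.cast : ℕ → R) := by
      ext a
      simp [fwdDiff]
    rw [iterate_succ_apply, iterate_succ_apply, h, ih]

section Whitney

open Polynomial

noncomputable def scaledWhitney (m n k : ℕ) : ℝ :=
  Δ_[1] ^[k] (fun a : ℕ => ((m : ℝ) * a + 1) ^ n) 0

lemma scaledWhitney_eq_fwdDiff_iter_eval (m n k : ℕ) :
    scaledWhitney m n k = Δ_[1] ^[k] ((C (m : ℝ) * X + C 1) ^ n).eval 0 := by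
  have hf : (fun a : ℕ => ((m : ℝ) * a + 1) ^ n) = ((C (m : ℝ) * X + C 1) ^ n).eval ∘ Nat.cast := by
    ext a
    simp
  rw [scaledWhitney, hf, fwdDiff_iter_comp_natCast, Function.comp_apply, Nat.cast_zero]

lemma scaledWhitney_eq_zero_of_lt (m : ℕ) {n k : ℕ} (h : n < k) : scaledWhitney m n k = 0 := by
  have hdeg : ((C (m : ℝ) * X + C 1) ^ n).natDegree ≤ n := by compute_degree
  rw [scaledWhitney_eq_fwdDiff_iter_eval, fwdDiff_iter_eq_zero_of_degree_lt (hdeg.trans_lt h),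
    Pi.zero_apply]

lemma scaledWhitney_self {m : ℕ} (hm : m ≠ 0) (n : ℕ) : scaledWhitney m n n = m ^ n * n ! := by
  have hm' : (m : ℝ) ≠ 0 := Nat.cast_ne_zero.2 hm
  have hdeg : ((C (m : ℝ) * X + C 1) ^ n).natDegree = n := by
    rw [natDegree_pow, natDegree_linear hm', mul_one]
  have hfact := fwdDiff_iter_degree_eq_factorial ((C (m : ℝ) * X + C 1) ^ n)
  rw [hdeg, leadingCoeff_pow, leadingCoeff_linear hm'] at hfact
  rw [scaledWhitney_eq_fwdDiff_iter_eval, hfact]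
  simp

lemma whitney2_eq (m n k : ℕ) : whitney2 m n k = scaledWhitney m n k / ((m : ℝ) ^ k * k !) := by
  rw [whitney2, scaledWhitney, fwdDiff_iter_eq_sum_shift, one_div_mul_eq_div]
  simp [zsmul_eq_mul]

lemma pow_eq_sum_scaledWhitney_mul_choose (m : ℕ) {n N : ℕ} (hN : n ≤ N) (a : ℕ) :
    ((m : ℝ) * a + 1) ^ n = ∑ r ∈ range (N + 1), scaledWhitney m n r * a.choose r := by
  calc ((m : ℝ) * a + 1) ^ n = ∑ r ∈ range (a + 1), scaledWhitney m n r * a.choose r := by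
        simpa [scaledWhitney, mul_comm] using
          shift_eq_sum_fwdDiff_iter 1 (fun b : ℕ => ((m : ℝ) * b + 1) ^ n) a 0
    _ = ∑ r ∈ range (a + N + 1), scaledWhitney m n r * a.choose r := by
        refine sum_subset (range_subset_range.2 (by omega)) fun r _ hr => ?_
        rw [Nat.choose_eq_zero_of_lt (by simpa using hr), Nat.cast_zero, mul_zero]
    _ = ∑ r ∈ range (N + 1), scaledWhitney m n r * a.choose r := by
        refine (sum_subset (range_subset_range.2 (by omega)) fun r _ hr => ?_).symm
        rw [scaledWhitney_eq_zero_of_lt m (by simp at hr; omega), zero_mul]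

end Whitney

noncomputable def whitneyMatrix (m n : ℕ) : Matrix (Fin n) (Fin n) ℝ :=
  of fun i r => scaledWhitney m i r

lemma tannyDowling_eq_newtonFunctional {m : ℕ} (hm : m ≠ 0) (x : ℝ) {n N : ℕ} (hN : n ≤ N) :
    tannyDowling m n x = newtonFunctional (x / m) N (fun a : ℕ => ((m : ℝ) * a + 1) ^ n) := by
  have hm' : (m : ℝ) ≠ 0 := Nat.cast_ne_zero.2 hm
  rw [newtonFunctional_apply, tannyDowling]
  refine sum_subset_zero_on_sdiff (range_subset_range.2 (by omega)) (fun k hk => ?_) fun k _ => ?_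
  · rw [← scaledWhitney, scaledWhitney_eq_zero_of_lt m (by simp at hk; omega), mul_zero]
  · rw [← scaledWhitney, whitney2_eq, div_pow]
    field_simp

lemma hankel_eq_whitneyMatrix_mul {m : ℕ} (hm : m ≠ 0) (x : ℝ) (n : ℕ) :
    (of fun i j : Fin (n + 1) => tannyDowling m (i + j) x) =
      whitneyMatrix m (n + 1) * delannoyMatrix (x / m) (n + 1) * (whitneyMatrix m (n + 1))ᵀ := by
  ext i j
  have hpow : (fun a : ℕ => ((m : ℝ) * a + 1) ^ ((i : ℕ) + j)) =
      ∑ r ∈ range (n + 1), ∑ s ∈ range (n + 1), (scaledWhitney m i r * scaledWhitney m j s) •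
        fun a : ℕ => (a.choose r : ℝ) * a.choose s := by
    ext a
    rw [pow_add, pow_eq_sum_scaledWhitney_mul_choose m (by omega : (i : ℕ) ≤ n),
      pow_eq_sum_scaledWhitney_mul_choose m (by omega : (j : ℕ) ≤ n), sum_mul_sum]
    simp only [Finset.sum_apply, Pi.smul_apply, smul_eq_mul]
    exact sum_congr rfl fun _ _ => sum_congr rfl fun _ _ => by ring
  rw [of_apply, tannyDowling_eq_newtonFunctional hm x (N := 2 * n) (by omega), hpow]
  simp only [map_sum, map_smul, smul_eq_mul, mul_apply, sum_mul, whitneyMatrix, delannoyMatrix,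
    of_apply, transpose_apply]
  rw [sum_comm, ← Fin.sum_univ_eq_sum_range]
  refine Fintype.sum_congr _ _ fun s => ?_
  rw [← Fin.sum_univ_eq_sum_range]
  refine Fintype.sum_congr _ _ fun r => ?_
  rw [newtonFunctional_choose_mul_choose _ (by omega)]
  ring

lemma det_whitneyMatrix {m : ℕ} (hm : m ≠ 0) (n : ℕ) :
    (whitneyMatrix m (n + 1)).det =
      (m : ℝ) ^ (n + 1).choose 2 * ∏ k ∈ range (n + 1), (k ! : ℝ) := by
  rw [det_of_isLowerTriangular (whitneyMatrix m (n + 1))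
      fun i j hij => scaledWhitney_eq_zero_of_lt m hij,
    Nat.choose_two_right, ← sum_range_id, ← prod_pow_eq_pow_sum, ← prod_mul_distrib,
    ← Fin.prod_univ_eq_prod_range]
  simp [whitneyMatrix, scaledWhitney_self hm]

end TannyDowling

open TannyDowling

/-- The Hankel determinant of the Tanny–Dowling polynomials is
`(x(x+m))^{C(n+1,2)} ∏_{k=0}^n (k!)²`. -/
theorem tannyDowling_hankel (m : ℕ) (hm : 0 < m) (x : ℝ) (n : ℕ) :
    Matrix.det (Matrix.of fun i j : Fin (n + 1) => tannyDowling m ((i : ℕ) + (j : ℕ)) x) =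
      (x * (x + m)) ^ ((n + 1).choose 2) *
        ∏ k ∈ Finset.range (n + 1), (k.factorial : ℝ) ^ 2 := by
  have hm' : (m : ℝ) ≠ 0 := Nat.cast_ne_zero.2 hm.ne'
  rw [hankel_eq_whitneyMatrix_mul hm.ne', det_mul, det_mul, det_transpose,
    det_whitneyMatrix hm.ne', det_delannoyMatrix, prod_pow]
  have hx : x * (x + m) = (m : ℝ) ^ 2 * (x / m * (x / m + 1)) := by field_simp
  rw [hx, mul_pow ((m : ℝ) ^ 2), ← pow_mul]
  ring
end

section
/- Let m be a positive integer and x a real number. Then in ℝ[[z]] the exponential generating function of the bivariate geometric polynomials satisfies (m + x − x·e^{mz}) · ∑_{n≥0} ω_n(x,m) z^n/n! = m; equivalently ∑_{n≥0} ω_n(x,m) z^n/n! = m/(m + x − x e^{mz}). -/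
/-- Stirling numbers of the second kind:
`S(n,k) = (1/k!) ∑_{j=0}^k (−1)^{k−j} C(k,j) j^n`. -/
noncomputable def stirling2 (n k : ℕ) : ℝ :=
  (1 / (k.factorial : ℝ)) *
    ∑ j ∈ Finset.range (k + 1), (-1 : ℝ) ^ (k - j) * (k.choose j) * (j : ℝ) ^ n

/-- Bivariate geometric polynomials `ω_n(x,m) = ∑_{k=0}^n k!·S(n,k)·x^k·m^{n−k}`. -/
noncomputable def geomPoly (n : ℕ) (x : ℝ) (m : ℕ) : ℝ :=
  ∑ k ∈ Finset.range (n + 1), (k.factorial : ℝ) * stirling2 n k * x ^ k * (m : ℝ) ^ (n - k)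

/-!
The exponential generating function of `k! S(n,k)` in `n` is `(eᶻ - 1)ᵏ`: expand with the
binomial theorem and read off the coefficients of `e^{jz}`. So for `q = (x/m)(e^{mz} - 1)`,
which has no constant term, the `n`-th coefficient of `∑ ω_n(x,m) zⁿ/n!` is that of the
finite geometric sum `∑_{j ≤ n} qʲ`. Hence this series inverts `1 - q`, and
`m (1 - q) = m + x - x e^{mz}`.
-/

open Finset PowerSeries
open scoped Nat

theorem factorial_mul_stirling2 (n k : ℕ) :
    (k ! : ℝ) * stirling2 n k =
      ∑ j ∈ range (k + 1), (-1 : ℝ) ^ (k - j) * k.choose j * (j : ℝ) ^ n := by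
  rw [stirling2, ← mul_assoc, mul_one_div_cancel (by positivity), one_mul]

theorem PowerSeries.coeff_exp_sub_one_pow (n k : ℕ) :
    coeff n ((exp ℝ - 1) ^ k) = k ! * stirling2 n k / n ! := by
  rw [factorial_mul_stirling2, sum_div, sub_eq_add_neg, add_pow, map_sum]
  refine sum_congr rfl fun j _ => ?_
  have hconst : (-1 : ℝ⟦X⟧) ^ (k - j) * (k.choose j : ℝ⟦X⟧) =
      C ((-1 : ℝ) ^ (k - j) * k.choose j) := by
    simp
  rw [mul_assoc, hconst, coeff_mul_C, exp_pow_eq_rescale_exp, coeff_rescale, coeff_exp]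
  simp only [one_div, map_inv₀, map_natCast]
  ring

namespace PowerSeries

variable {R : Type*} [CommRing R]

theorem X_pow_dvd_pow_of_constantCoeff_eq_zero {q : R⟦X⟧} (hq : constantCoeff q = 0) (n : ℕ) :
    X ^ n ∣ q ^ n :=
  pow_dvd_pow_of_dvd (X_dvd_iff.mpr hq) n

theorem coeff_geom_sum_of_lt {q : R⟦X⟧} (hq : constantCoeff q = 0) {k N : ℕ} (hkN : k < N) :
    coeff k (∑ i ∈ range N, q ^ i) = coeff k (∑ i ∈ range (k + 1), q ^ i) := by
  rw [← sum_range_add_sum_Ico _ hkN, map_add, add_eq_left, map_sum]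
  refine sum_eq_zero fun i hi => X_pow_dvd_iff.mp ?_ k (lt_add_one k)
  exact (pow_dvd_pow X (mem_Ico.mp hi).1).trans (X_pow_dvd_pow_of_constantCoeff_eq_zero hq i)

theorem one_sub_mul_eq_one_of_coeff_eq_geom_sum {q W : R⟦X⟧} (hq : constantCoeff q = 0)
    (hW : ∀ n, coeff n W = coeff n (∑ i ∈ range (n + 1), q ^ i)) : (1 - q) * W = 1 := by
  ext n
  set S := ∑ i ∈ range (n + 1), q ^ i
  have hWS : X ^ (n + 1) ∣ W - S := X_pow_dvd_iff.mpr fun k hk => by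
    rw [map_sub, hW k, coeff_geom_sum_of_lt hq hk, sub_self]
  have hsplit : (1 - q) * W - 1 = (1 - q) * (W - S) - q ^ (n + 1) := by
    rw [mul_sub, mul_neg_geom_sum]; ring
  have hdvd : X ^ (n + 1) ∣ (1 - q) * W - 1 := hsplit ▸
    dvd_sub (dvd_mul_of_dvd_right hWS _) (X_pow_dvd_pow_of_constantCoeff_eq_zero hq _)
  rw [← sub_eq_zero, ← map_sub]
  exact X_pow_dvd_iff.mp hdvd n (lt_add_one n)

end PowerSeries

theorem geomPoly_div_factorial_eq_coeff_geom_sum {m : ℕ} (hm : m ≠ 0) (x : ℝ) (n : ℕ) :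
    geomPoly n x m / n ! =
      coeff n (∑ j ∈ range (n + 1), (C (x / m) * rescale (m : ℝ) (exp ℝ - 1)) ^ j) := by
  rw [geomPoly, sum_div, map_sum]
  refine sum_congr rfl fun j hj => ?_
  have hmn : (m : ℝ) ^ n = m ^ j * m ^ (n - j) :=
    (pow_mul_pow_sub _ (mem_range_succ_iff.mp hj)).symm
  have hm' : (m : ℝ) ≠ 0 := Nat.cast_ne_zero.mpr hm
  rw [mul_pow, ← map_pow, ← map_pow, coeff_C_mul, coeff_rescale, coeff_exp_sub_one_pow, hmn,
    div_pow]
  field_simp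

/-- The EGF of the bivariate geometric polynomials satisfies
`(m + x − x·e^{mz}) · ∑_{n≥0} ω_n(x,m) z^n/n! = m` in `ℝ[[z]]`;
equivalently `∑ ω_n(x,m) z^n/n! = m/(m + x − x e^{mz})`. -/
theorem geomPoly_egf (m : ℕ) (hm : 0 < m) (x : ℝ) :
    (PowerSeries.C ((m : ℝ) + x) -
        PowerSeries.C x * PowerSeries.rescale (m : ℝ) (PowerSeries.exp ℝ)) *
      PowerSeries.mk (fun n => geomPoly n x m / n.factorial) =
      PowerSeries.C (m : ℝ) := by
  set q : ℝ⟦X⟧ := C (x / m) * rescale (m : ℝ) (exp ℝ - 1)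
  have hq : constantCoeff q = 0 := by
    rw [map_mul, ← coeff_zero_eq_constantCoeff_apply (rescale _ _), coeff_rescale]
    simp
  have hfactor : C ((m : ℝ) + x) - C x * rescale (m : ℝ) (exp ℝ) = C (m : ℝ) * (1 - q) := by
    have hm' : (m : ℝ) ≠ 0 := Nat.cast_ne_zero.mpr hm.ne'
    simp only [q, map_sub, map_one, mul_sub, mul_one, ← mul_assoc, ← map_mul,
      mul_div_cancel₀ x hm', map_add]
    ring
  rw [hfactor, mul_assoc, one_sub_mul_eq_one_of_coeff_eq_geom_sum hq fun n => ?_, mul_one]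
  rw [coeff_mk, geomPoly_div_factorial_eq_coeff_geom_sum hm.ne']
end

section
/- Let m be a positive integer and x a real number. For every n ≥ 0, the Hankel determinant of the bivariate geometric polynomials satisfies det( (ω_{i+j}(x,m))_{0 ≤ i,j ≤ n} ) = (x(x+m))^{C(n+1,2)} · ∏_{k=0}^n (k!)^2, where C(n+1,2) = n(n+1)/2. -/
/-- `Tk n k = k! · S(n,k)` as an alternating sum. -/
noncomputable def Tk (n k : ℕ) : ℝ :=
  ∑ j ∈ Finset.range (k + 1), (-1 : ℝ) ^ (k - j) * (k.choose j) * (j : ℝ) ^ n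

lemma fact_stirling (n k : ℕ) : (k.factorial : ℝ) * stirling2 n k = Tk n k := by
  have h : (k.factorial : ℝ) ≠ 0 := Nat.cast_ne_zero.mpr k.factorial_ne_zero
  rw [stirling2, Tk, ← mul_assoc, mul_one_div, div_self h, one_mul]

lemma choose_key1 (k j : ℕ) :
    (k+1).choose j * j + (k+1) * (k.choose j) = (k+1) * ((k+1).choose j) := by
  cases j with
  | zero => simp
  | succ i =>
    have h1 := Nat.add_one_mul_choose_eq k i
    have h2 : (k+1).choose (i+1) = k.choose i + k.choose (i+1) := Nat.choose_succ_succ k i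
    rw [h2] at h1 ⊢
    zify at h1 ⊢
    linarith [h1]

lemma Tk_succ (n k : ℕ) : Tk (n+1) (k+1) = ((k:ℝ)+1) * (Tk n (k+1) + Tk n k) := by
  have step : ∀ j ∈ Finset.range (k+2),
      (-1 : ℝ) ^ (k+1-j) * ((k+1).choose j) * (j : ℝ) ^ (n+1)
      = ((k:ℝ)+1) * ((-1 : ℝ) ^ (k+1-j) * ((k+1).choose j) * (j : ℝ) ^ n)
        - ((k:ℝ)+1) * ((-1 : ℝ) ^ (k+1-j) * (k.choose j) * (j : ℝ) ^ n) := by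
    intro j _
    have h : ((k+1).choose j : ℝ) * j + ((k:ℝ)+1) * (k.choose j)
        = ((k:ℝ)+1) * ((k+1).choose j) := by exact_mod_cast choose_key1 k j
    linear_combination ((-1:ℝ)^(k+1-j) * (j:ℝ)^n) * h
  have e1 : Tk (n+1) (k+1)
      = (∑ j ∈ Finset.range (k+2), ((k:ℝ)+1) * ((-1 : ℝ) ^ (k+1-j) * ((k+1).choose j) * (j : ℝ) ^ n))
        - ∑ j ∈ Finset.range (k+2), ((k:ℝ)+1) * ((-1 : ℝ) ^ (k+1-j) * (k.choose j) * (j : ℝ) ^ n) := by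
    rw [Tk, ← Finset.sum_sub_distrib]
    exact Finset.sum_congr rfl step
  have e2 : ∑ j ∈ Finset.range (k+2), ((k:ℝ)+1) * ((-1 : ℝ) ^ (k+1-j) * ((k+1).choose j) * (j : ℝ) ^ n)
      = ((k:ℝ)+1) * Tk n (k+1) := by
    rw [Tk, Finset.mul_sum]
  have e3 : ∑ j ∈ Finset.range (k+2), ((k:ℝ)+1) * ((-1 : ℝ) ^ (k+1-j) * (k.choose j) * (j : ℝ) ^ n)
      = -(((k:ℝ)+1) * Tk n k) := by
    rw [Finset.sum_range_succ]
    have hlast : ((k:ℝ)+1) * ((-1 : ℝ) ^ (k+1-(k+1)) * (k.choose (k+1)) * ((k+1 : ℕ) : ℝ) ^ n) = 0 := by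
      simp [Nat.choose_succ_self]
    rw [hlast, add_zero, Tk, Finset.mul_sum, ← Finset.sum_neg_distrib]
    refine Finset.sum_congr rfl ?_
    intro j hj
    have hj' : j ≤ k := Nat.lt_succ_iff.mp (Finset.mem_range.mp hj)
    have he : k+1-j = (k-j)+1 := by omega
    rw [he, pow_succ]
    ring
  rw [e1, e2, e3]
  ring

lemma Tk_zero_right (n : ℕ) : Tk (n+1) 0 = 0 := by
  simp [Tk]

lemma Tk_zero_zero : Tk 0 0 = 1 := by
  simp [Tk]

lemma Tk_zero_of_lt : ∀ n k : ℕ, n < k → Tk n k = 0 := by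
  intro n
  induction n with
  | zero =>
    intro k hk
    obtain ⟨k', rfl⟩ : ∃ k', k = k' + 1 := ⟨k - 1, by omega⟩
    have halt : ∑ j ∈ Finset.range (k'+1+1), (-1 : ℤ) ^ j * ((k'+1).choose j) = 0 :=
      Int.alternating_sum_range_choose_of_ne (by omega)
    have halt' : ∑ j ∈ Finset.range (k'+1+1), (-1 : ℝ) ^ j * ((k'+1).choose j) = 0 := by
      exact_mod_cast congrArg (fun z : ℤ => (z : ℝ)) halt
    rw [Tk, ← mul_zero ((-1:ℝ)^(k'+1)), ← halt', Finset.mul_sum]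
    refine Finset.sum_congr rfl ?_
    intro j hj
    have hj' : j ≤ k' + 1 := Nat.lt_succ_iff.mp (Finset.mem_range.mp hj)
    have hsign : (-1:ℝ) ^ (k'+1-j) = (-1:ℝ)^(k'+1) * (-1:ℝ)^j := by
      rw [← pow_add, show k'+1+j = (k'+1-j) + 2*j by omega, pow_add, pow_mul]
      norm_num
    rw [hsign]
    have : ((j:ℝ))^0 = 1 := by norm_num
    simp [pow_zero]
    ring
  | succ n ih =>
    intro k hk
    obtain ⟨k', rfl⟩ : ∃ k', k = k' + 1 := ⟨k - 1, by omega⟩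
    rw [Tk_succ, ih k' (by omega), ih (k'+1) (by omega)]
    ring

lemma Tk_self : ∀ n : ℕ, Tk n n = (n.factorial : ℝ) := by
  intro n
  induction n with
  | zero => simpa using Tk_zero_zero
  | succ n ih =>
    rw [Tk_succ, Tk_zero_of_lt n (n+1) (by omega), ih]
    push_cast [Nat.factorial_succ]
    ring

lemma Tk_succ_all (n j : ℕ) : Tk (n+1) j = (j:ℝ) * (Tk n j + Tk n (j-1)) := by
  cases j with
  | zero => simpa using Tk_zero_right n
  | succ j' => rw [Tk_succ]; push_cast; ring_nf

lemma chooseR_a (j k : ℕ) (h : k ≤ j) :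
    (j:ℝ) * (j.choose k) = (k:ℝ) * (j.choose k) + ((k:ℝ)+1) * (j.choose (k+1)) := by
  have h1 : ((j.choose (k+1) * (k+1) : ℕ) : ℝ) = ((j.choose k * (j - k) : ℕ) : ℝ) := by
    exact_mod_cast congrArg (fun z : ℕ => (z : ℝ)) (Nat.choose_succ_right_eq j k)
  push_cast [h] at h1
  linear_combination -h1

lemma chooseR_b (j k : ℕ) (h : k ≤ j) :
    ((j:ℝ)+1) * ((j+1).choose k)
      = (k:ℝ) * (j.choose (k-1)) + (2*(k:ℝ)+1) * (j.choose k) + ((k:ℝ)+1) * (j.choose (k+1)) := by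
  cases k with
  | zero => push_cast [Nat.choose_one_right, Nat.choose_zero_right]; ring
  | succ k' =>
    have hk' : k' ≤ j := by omega
    have h2 : ((j+1).choose (k'+1) : ℝ) = (j.choose k' : ℝ) + (j.choose (k'+1) : ℝ) := by
      exact_mod_cast congrArg (fun z : ℕ => (z : ℝ)) (Nat.choose_succ_succ j k')
    have ha1 := chooseR_a j k' hk'
    have ha2 := chooseR_a j (k'+1) h
    push_cast at ha2 ⊢
    linear_combination h2 * ((j:ℝ)+1) + ha1 + ha2

/-- Connection coefficients (times `k!`). -/
noncomputable def U (x : ℝ) (m : ℕ) (n k : ℕ) : ℝ :=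
  ∑ j ∈ Finset.range (n + 1), (j.choose k : ℝ) * Tk n j * x ^ (j - k) * (m : ℝ) ^ (n - j)

lemma U_zero_of_lt (x : ℝ) (m n k : ℕ) (h : n < k) : U x m n k = 0 := by
  rw [U]
  refine Finset.sum_eq_zero ?_
  intro j hj
  have : j < k := by have := Finset.mem_range.mp hj; omega
  rw [Nat.choose_eq_zero_of_lt this]
  simp

lemma U_zero_zero (x : ℝ) (m : ℕ) : U x m 0 0 = 1 := by
  simp [U, Tk_zero_zero]

lemma U_diag (x : ℝ) (m n : ℕ) : U x m n n = (n.factorial : ℝ) := by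
  rw [U, Finset.sum_range_succ]
  have h0 : ∑ j ∈ Finset.range n, (j.choose n : ℝ) * Tk n j * x ^ (j - n) * (m : ℝ) ^ (n - j) = 0 := by
    refine Finset.sum_eq_zero ?_
    intro j hj
    rw [Nat.choose_eq_zero_of_lt (Finset.mem_range.mp hj)]
    simp
  rw [h0, Tk_self]
  simp

lemma U_col_zero (x : ℝ) (m n : ℕ) : U x m n 0 = geomPoly n x m := by
  rw [U, geomPoly]
  refine Finset.sum_congr rfl ?_
  intro k _
  rw [fact_stirling]
  simp [Nat.choose_zero_right]
lemma key_pointwise (x w T : ℝ) (j k : ℕ) :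
    (j.choose k : ℝ) * (j:ℝ) * T * x ^ (j - k) * w
      + ((j+1).choose k : ℝ) * ((j:ℝ)+1) * T * x ^ (j + 1 - k)
    = (k:ℝ) * ((j.choose (k-1) : ℝ) * T * x ^ (j - (k-1)))
      + ((2*(k:ℝ)+1) * x + (k:ℝ) * w) * ((j.choose k : ℝ) * T * x ^ (j - k))
      + ((k:ℝ)+1) * (x * (x + w)) * ((j.choose (k+1) : ℝ) * T * x ^ (j - (k+1))) := by
  rcases Nat.lt_or_ge j k with hjk | hjk
  · -- j < k : either j+1 < k, or j+1 = k
    rcases Nat.lt_or_ge (j+1) k with h2 | h2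
    · rw [Nat.choose_eq_zero_of_lt hjk, Nat.choose_eq_zero_of_lt h2,
        Nat.choose_eq_zero_of_lt (by omega : j < k - 1),
        Nat.choose_eq_zero_of_lt (by omega : j < k + 1)]
      simp
    · have hk : k = j + 1 := by omega
      subst hk
      rw [Nat.choose_eq_zero_of_lt hjk, Nat.choose_eq_zero_of_lt (by omega : j < j + 1 + 1)]
      have e1 : j + 1 - (j + 1) = 0 := by omega
      have e2 : j - (j + 1 - 1) = 0 := by omega
      rw [e1, e2, Nat.add_sub_cancel, Nat.choose_self, Nat.choose_self]
      push_cast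
      ring
  · -- k ≤ j
    rcases Nat.eq_or_lt_of_le hjk with hkj | hkj
    · -- j = k
      obtain rfl : j = k := hkj.symm
      rw [Nat.choose_self, Nat.choose_eq_zero_of_lt (by omega : j < j + 1)]
      have e1 : j - j = 0 := by omega
      have e2 : j + 1 - j = 1 := by omega
      rw [e1, e2]
      rcases Nat.eq_zero_or_pos j with hj0 | hj0
      · subst hj0; norm_num [mul_comm]
      · have e3 : j - (j - 1) = 1 := by omega
        rw [e3]
        have hcs : ((j+1).choose j : ℝ) = (j:ℝ) + 1 := by
          rw [Nat.choose_succ_self_right]; push_cast; ring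
        have hcp : (j.choose (j-1) : ℝ) = (j:ℝ) := by
          obtain ⟨i, hi⟩ : ∃ i, j = i + 1 := ⟨j-1, by omega⟩
          rw [hi, Nat.add_sub_cancel, Nat.choose_succ_self_right]
        rw [hcs, hcp]
        push_cast
        ring
    · -- k < j
      rcases Nat.eq_zero_or_pos k with hk0 | hk0
      · subst hk0
        obtain ⟨d, rfl⟩ : ∃ d, j = d + 1 := ⟨j - 1, by omega⟩
        simp only [Nat.zero_sub, Nat.sub_zero, Nat.add_sub_cancel,
          Nat.choose_zero_right]
        rw [show (0:ℕ)+1 = 1 from rfl, Nat.choose_one_right]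
        push_cast
        ring
      · obtain ⟨d, rfl⟩ : ∃ d, j = k + d + 1 := ⟨j - k - 1, by omega⟩
        have e1 : k + d + 1 - k = d + 1 := by omega
        have e2 : k + d + 1 + 1 - k = d + 2 := by omega
        have e3 : k + d + 1 - (k - 1) = d + 2 := by omega
        have e4 : k + d + 1 - (k + 1) = d := by omega
        rw [e1, e2, e3, e4]
        have ha := chooseR_a (k+d+1) k (by omega)
        have hb := chooseR_b (k+d+1) k (by omega)
        push_cast at ha hb ⊢
        linear_combination (T * x ^ (d+1) * w) * ha + (T * x ^ (d+2)) * hb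

lemma U_rec (x : ℝ) (m n k : ℕ) :
    U x m (n+1) k
      = (k:ℝ) * U x m n (k-1) + ((2*(k:ℝ)+1) * x + (k:ℝ) * (m:ℝ)) * U x m n k
        + ((k:ℝ)+1) * (x * (x + (m:ℝ))) * U x m n (k+1) := by
  have hL : U x m (n+1) k
      = ∑ j ∈ Finset.range (n+1),
          ((j.choose k : ℝ) * (j:ℝ) * (Tk n j * (m:ℝ)^(n-j)) * x^(j-k) * (m:ℝ)
           + ((j+1).choose k : ℝ) * ((j:ℝ)+1) * (Tk n j * (m:ℝ)^(n-j)) * x^(j+1-k)) := by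
    rw [U]
    have e0 : ∀ j ∈ Finset.range (n+1+1),
        (j.choose k : ℝ) * Tk (n+1) j * x^(j-k) * (m:ℝ)^(n+1-j)
        = (j.choose k : ℝ) * (j:ℝ) * Tk n j * x^(j-k) * (m:ℝ)^(n+1-j)
          + (j.choose k : ℝ) * (j:ℝ) * Tk n (j-1) * x^(j-k) * (m:ℝ)^(n+1-j) := by
      intro j _
      rw [Tk_succ_all]
      ring
    rw [Finset.sum_congr rfl e0, Finset.sum_add_distrib, Finset.sum_add_distrib]
    congr 1
    · -- A part
      rw [Finset.sum_range_succ, Tk_zero_of_lt n (n+1) (by omega)]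
      simp only [mul_zero, zero_mul, add_zero]
      refine Finset.sum_congr rfl ?_
      intro j hj
      have hj' : j ≤ n := Nat.lt_succ_iff.mp (Finset.mem_range.mp hj)
      rw [show n+1-j = (n-j)+1 from by omega, pow_succ]
      ring
    · -- B part
      rw [Finset.sum_range_succ']
      simp only [Nat.cast_zero, mul_zero, zero_mul, add_zero]
      refine Finset.sum_congr rfl ?_
      intro j hj
      simp only [Nat.add_sub_cancel, Nat.succ_sub_succ, Nat.sub_zero]
      push_cast
      ring
  have hR : (k:ℝ) * U x m n (k-1) + ((2*(k:ℝ)+1) * x + (k:ℝ) * (m:ℝ)) * U x m n k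
        + ((k:ℝ)+1) * (x * (x + (m:ℝ))) * U x m n (k+1)
      = ∑ j ∈ Finset.range (n+1),
          ((k:ℝ) * ((j.choose (k-1) : ℝ) * (Tk n j * (m:ℝ)^(n-j)) * x^(j-(k-1)))
           + ((2*(k:ℝ)+1) * x + (k:ℝ) * (m:ℝ)) * ((j.choose k : ℝ) * (Tk n j * (m:ℝ)^(n-j)) * x^(j-k))
           + ((k:ℝ)+1) * (x * (x + (m:ℝ))) * ((j.choose (k+1) : ℝ) * (Tk n j * (m:ℝ)^(n-j)) * x^(j-(k+1)))) := by
    rw [U, U, U, Finset.mul_sum, Finset.mul_sum, Finset.mul_sum,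
      ← Finset.sum_add_distrib, ← Finset.sum_add_distrib]
    refine Finset.sum_congr rfl ?_
    intro j _
    ring
  rw [hL, hR]
  refine Finset.sum_congr rfl ?_
  intro j _
  linear_combination key_pointwise x (m:ℝ) (Tk n j * (m:ℝ)^(n-j)) j k

noncomputable def F (x : ℝ) (m : ℕ) (N i j : ℕ) : ℝ :=
  ∑ k ∈ Finset.range N, U x m i k * U x m j k * (x*(x+(m:ℝ)))^k

lemma F_symm (x : ℝ) (m N i j : ℕ) : F x m N i j = F x m N j i := by
  rw [F, F]; exact Finset.sum_congr rfl fun k _ => by ring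

lemma F_step (x : ℝ) (m : ℕ) (N' i j : ℕ) (hj : j < N'+1) :
    F x m (N'+1) (i+1) j
      = ∑ k ∈ Finset.range (N'+1),
          (((2*(k:ℝ)+1)*x + (k:ℝ)*(m:ℝ)) * (U x m i k * U x m j k) * (x*(x+(m:ℝ)))^k
           + ((k:ℝ)+1) * (U x m i (k+1) * U x m j k + U x m i k * U x m j (k+1))
             * (x*(x+(m:ℝ)))^(k+1)) := by
  rw [F]
  have e0 : ∀ k ∈ Finset.range (N'+1),
      U x m (i+1) k * U x m j k * (x*(x+(m:ℝ)))^k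
      = ((k:ℝ) * U x m i (k-1) * U x m j k * (x*(x+(m:ℝ)))^k)
        + (((2*(k:ℝ)+1)*x + (k:ℝ)*(m:ℝ)) * (U x m i k * U x m j k) * (x*(x+(m:ℝ)))^k
           + ((k:ℝ)+1) * (U x m i (k+1) * U x m j k) * (x*(x+(m:ℝ)))^(k+1)) := by
    intro k _
    rw [U_rec, pow_succ]
    ring
  rw [Finset.sum_congr rfl e0, Finset.sum_add_distrib]
  have eS1 : ∑ k ∈ Finset.range (N'+1), ((k:ℝ) * U x m i (k-1) * U x m j k * (x*(x+(m:ℝ)))^k)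
      = ∑ k ∈ Finset.range (N'+1),
          ((k:ℝ)+1) * (U x m i k * U x m j (k+1)) * (x*(x+(m:ℝ)))^(k+1) := by
    rw [Finset.sum_range_succ'
      (fun k => (k:ℝ) * U x m i (k-1) * U x m j k * (x*(x+(m:ℝ)))^k) N']
    rw [Finset.sum_range_succ
      (fun k => ((k:ℝ)+1) * (U x m i k * U x m j (k+1)) * (x*(x+(m:ℝ)))^(k+1)) N']
    rw [U_zero_of_lt x m j (N'+1) (by omega)]
    simp only [Nat.cast_zero, zero_mul, mul_zero, add_zero, Nat.add_sub_cancel]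
    refine Finset.sum_congr rfl ?_
    intro k _
    push_cast
    ring
  rw [eS1, ← Finset.sum_add_distrib]
  refine Finset.sum_congr rfl ?_
  intro k _
  ring

lemma F_swap (x : ℝ) (m N' i j : ℕ) (hi : i < N'+1) (hj : j < N'+1) :
    F x m (N'+1) (i+1) j = F x m (N'+1) i (j+1) := by
  rw [F_step x m N' i j hj, F_symm x m (N'+1) i (j+1), F_step x m N' j i hi]
  exact Finset.sum_congr rfl fun k _ => by ring

lemma F_val (x : ℝ) (m : ℕ) : ∀ j i N : ℕ, i + j < N → F x m N i j = geomPoly (i+j) x m := by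
  intro j
  induction j with
  | zero =>
    intro i N hN
    rw [F, Finset.sum_eq_single_of_mem 0 (Finset.mem_range.mpr (by omega))]
    · rw [U_zero_zero, U_col_zero]
      simp
    · intro k _ hk
      rw [U_zero_of_lt x m 0 k (by omega)]
      ring
  | succ j ih =>
    intro i N hN
    obtain ⟨N', rfl⟩ : ∃ N', N = N'+1 := ⟨N - 1, by omega⟩
    rw [← F_swap x m N' i j (by omega) (by omega), ih (i+1) (N'+1) (by omega),
      show i+1+j = i+(j+1) by omega]

lemma F_ext (x : ℝ) (m N N' i j : ℕ) (hi : i < N) (hNN' : N ≤ N') :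
    F x m N i j = F x m N' i j := by
  rw [F, F]
  refine Finset.sum_subset (Finset.range_subset_range.mpr hNN') ?_
  intro k hk hnk
  rw [U_zero_of_lt x m i k (by
    have h1 := Finset.mem_range.mp hk
    have h2 : ¬ k < N := fun h => hnk (Finset.mem_range.mpr h)
    omega)]
  ring

lemma master (x : ℝ) (m n i j : ℕ) (hi : i ≤ n) (hj : j ≤ n) :
    ∑ k ∈ Finset.range (n+1), U x m i k * U x m j k * (x*(x+(m:ℝ)))^k
      = geomPoly (i+j) x m := by
  have h1 : F x m (n+1) i j = F x m (i+j+n+2) i j :=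
    F_ext x m (n+1) (i+j+n+2) i j (by omega) (by omega)
  have h2 := F_val x m j i (i+j+n+2) (by omega)
  rw [← F, h1, h2]

/-- The Hankel determinant of the bivariate geometric polynomials is
`(x(x+m))^{C(n+1,2)} ∏_{k=0}^n (k!)²`. -/
theorem geomPoly_hankel (m : ℕ) (hm : 0 < m) (x : ℝ) (n : ℕ) :
    Matrix.det (Matrix.of fun i j : Fin (n + 1) => geomPoly ((i : ℕ) + (j : ℕ)) x m) =
      (x * (x + m)) ^ ((n + 1).choose 2) *
        ∏ k ∈ Finset.range (n + 1), (k.factorial : ℝ) ^ 2 := by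
  classical
  set L : Matrix (Fin (n+1)) (Fin (n+1)) ℝ := Matrix.of fun i k : Fin (n+1) => U x m i k with hLdef
  set D : Matrix (Fin (n+1)) (Fin (n+1)) ℝ :=
    Matrix.diagonal fun k : Fin (n+1) => (x*(x+(m:ℝ))) ^ (k:ℕ) with hDdef
  have hfact : (Matrix.of fun i j : Fin (n + 1) => geomPoly ((i : ℕ) + (j : ℕ)) x m)
      = L * D * (Matrix.transpose L) := by
    ext i j
    have : (L * D * (Matrix.transpose L)) i j = ∑ k : Fin (n+1), U x m i k * (x*(x+(m:ℝ)))^(k:ℕ) * U x m j k := by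
      rw [Matrix.mul_apply]
      refine Finset.sum_congr rfl ?_
      intro k _
      rw [Matrix.mul_diagonal, Matrix.transpose_apply]
      simp [hLdef]
    rw [Matrix.of_apply, this,
      Fin.sum_univ_eq_sum_range (fun k => U x m i k * (x*(x+(m:ℝ)))^k * U x m j k) (n+1)]
    rw [← master x m n i j (by omega) (by omega)]
    exact Finset.sum_congr rfl fun k _ => by ring
  have htri : L.BlockTriangular OrderDual.toDual := by
    intro i j hij
    have hij' : (i:ℕ) < (j:ℕ) := hij
    simp only [hLdef, Matrix.of_apply]
    exact U_zero_of_lt x m i j hij'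
  have hLdet : L.det = ∏ k ∈ Finset.range (n+1), (k.factorial : ℝ) := by
    rw [Matrix.det_of_lowerTriangular L htri]
    rw [← Fin.prod_univ_eq_prod_range (fun k => (Nat.factorial k : ℝ)) (n+1)]
    refine Finset.prod_congr rfl ?_
    intro i _
    simp only [hLdef, Matrix.of_apply]
    exact U_diag x m i
  have hsum : ∑ k ∈ Finset.range (n+1), k = (n+1).choose 2 := by
    have h1 : (∑ i ∈ Finset.range (n+1), i) * 2 = (n+1) * n := by
      simpa using Finset.sum_range_id_mul_two (n+1)
    have h2 : (n+1).choose 2 = (n+1) * n / 2 := by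
      rw [Nat.choose_two_right]
      simp
    set P := (n+1) * n with hP
    omega
  have hDdet : D.det = (x*(x+(m:ℝ))) ^ ((n+1).choose 2) := by
    rw [hDdef, Matrix.det_diagonal, Finset.prod_pow_eq_pow_sum]
    congr 1
    rw [Fin.sum_univ_eq_sum_range (fun k => k) (n+1)]
    exact hsum
  rw [hfact, Matrix.det_mul, Matrix.det_mul, Matrix.det_transpose, hLdet, hDdet]
  rw [Finset.prod_pow]
  ring
end
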